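/- Let X, Y, Z be Banach spaces such that ℓ_p embeds isomorphically into X, and X is isomorphic to the direct sum Y ⊕ Z. Then ℓ_p embeds isomorphically into Y or ℓ_p embeds isomorphically into Z. -/

import Mathlib

open scoped ENNReal

noncomputable section

/-- Two normed spaces are isomorphic (linearly homeomorphic). -/
def IsoBanach (X Y : Type*) [NormedAddCommGroup X] [NormedSpace ℝ X]
    [NormedAddCommGroup Y] [NormedSpace ℝ Y] : Prop :=
  Nonempty (X ≃L[ℝ] Y)

/-- `X` is isomorphic to a complemented subspace of `Y`: there are bounded linear maps
`f : X → Y` and `g : Y → X` with `g ∘ f = id` (so `f ∘ g` is a bounded projection of `Y`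
onto a subspace isomorphic to `X`). -/
def ComplementablyEmbedsIn (X Y : Type*) [NormedAddCommGroup X] [NormedSpace ℝ X]
    [NormedAddCommGroup Y] [NormedSpace ℝ Y] : Prop :=
  ∃ (f : X →L[ℝ] Y) (g : Y →L[ℝ] X), g.comp f = ContinuousLinearMap.id ℝ X

/-- `X` embeds isomorphically into `Y`: a bounded linear map bounded below (hence an
isomorphism onto its closed image). -/
def EmbedsIn (X Y : Type*) [NormedAddCommGroup X] [NormedSpace ℝ X]
    [NormedAddCommGroup Y] [NormedSpace ℝ Y] : Prop :=
  ∃ f : X →L[ℝ] Y, ∃ c : ℝ, 0 < c ∧ ∀ x, c * ‖x‖ ≤ ‖f x‖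

/-- The space `ℓ_p` of `p`-summable real sequences. -/
abbrev Lp' (p : ℝ≥0∞) : Type := lp (fun _ : ℕ => ℝ) p

/-!
Let `F : ℓ_p → Y × Z` be bounded below by `c`. Either the `Y`-component of `F` is bounded below
on the finitely supported vectors living on some tail `[n, ∞)` of coordinates, hence by density on
the isometric copy of `ℓ_p` they span; or a gliding hump produces disjointly supported unit
vectors `x k` with `‖(F (x k)).1‖ < c / 2 ^ (k + 2)`. Disjointly supported unit vectors of `ℓ_p`
span an isometric copy of `ℓ_p`, on which the `Y`-component of `F` has norm at most `c / 2`, so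
the `Z`-component is bounded below by `c / 2` there.
-/

theorem EmbedsIn.trans {X Y W : Type*} [NormedAddCommGroup X] [NormedSpace ℝ X]
    [NormedAddCommGroup Y] [NormedSpace ℝ Y] [NormedAddCommGroup W] [NormedSpace ℝ W]
    (hXY : EmbedsIn X Y) (hYW : EmbedsIn Y W) : EmbedsIn X W := by
  obtain ⟨f, c, hc, hf⟩ := hXY
  obtain ⟨g, d, hd, hg⟩ := hYW
  refine ⟨g.comp f, d * c, mul_pos hd hc, fun x => ?_⟩
  calc d * c * ‖x‖ = d * (c * ‖x‖) := mul_assoc _ _ _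
    _ ≤ d * ‖f x‖ := mul_le_mul_of_nonneg_left (hf x) hd.le
    _ ≤ ‖g (f x)‖ := hg _

theorem ContinuousLinearEquiv.embedsIn {X Y : Type*} [NormedAddCommGroup X] [NormedSpace ℝ X]
    [NormedAddCommGroup Y] [NormedSpace ℝ Y] (e : X ≃L[ℝ] Y) : EmbedsIn X Y := by
  set K := ‖(e.symm : Y →L[ℝ] X)‖
  refine ⟨e, (K + 1)⁻¹, by positivity, fun x => ?_⟩
  rw [inv_mul_le_iff₀ (by positivity)]
  calc ‖x‖ = ‖(e.symm : Y →L[ℝ] X) (e x)‖ := by simp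
    _ ≤ K * ‖e x‖ := (e.symm : Y →L[ℝ] X).le_opNorm _
    _ ≤ (K + 1) * ‖e x‖ := by gcongr; linarith

open Finset

section Blocks

variable {ι κ : Type*}

theorem rpow_norm_sum_of_pairwise {E : Type*} [SeminormedAddCommGroup E] {r : ℝ} (hr : 0 < r)
    {v : ι → E} (hv : Pairwise fun k l => v k = 0 ∨ v l = 0) (s : Finset ι) :
    ‖∑ k ∈ s, v k‖ ^ r = ∑ k ∈ s, ‖v k‖ ^ r := by
  have hzero_rpow : ∀ k, v k = 0 → ‖v k‖ ^ r = 0 := fun k hk => by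
    rw [hk, norm_zero, Real.zero_rpow hr.ne']
  by_cases h : ∃ k ∈ s, v k ≠ 0
  · obtain ⟨k, hk, hvk⟩ := h
    have hzero : ∀ l ∈ s, l ≠ k → v l = 0 := fun l _ hlk => (hv hlk).resolve_right hvk
    rw [sum_eq_single_of_mem k hk hzero,
      sum_eq_single_of_mem k hk fun l hl hlk => hzero_rpow l (hzero l hl hlk)]
  · push Not at h
    rw [sum_eq_zero h, sum_eq_zero fun k hk => hzero_rpow k (h k hk), norm_zero,
      Real.zero_rpow hr.ne']

variable {q : ℝ≥0∞} [Fact (1 ≤ q)]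

theorem rpow_norm_sum_smul_of_pairwise (hq : 0 < q.toReal) {x : ι → lp (fun _ : κ => ℝ) q}
    (hdisj : Pairwise fun k l => ∀ i, x k i = 0 ∨ x l i = 0) (hx : ∀ k, ‖x k‖ = 1)
    (a : ι → ℝ) (s : Finset ι) :
    ‖∑ k ∈ s, a k • x k‖ ^ q.toReal = ∑ k ∈ s, ‖a k‖ ^ q.toReal := by
  refine (lp.hasSum_norm hq _).unique ?_
  have hterm : ∀ k ∈ s, HasSum (fun i => ‖a k • x k i‖ ^ q.toReal) (‖a k‖ ^ q.toReal) := by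
    intro k _
    simpa [norm_smul, hx k] using lp.hasSum_norm hq (a k • x k)
  refine (hasSum_sum hterm).congr_fun fun i => ?_
  rw [lp.coeFn_sum, Finset.sum_apply]
  exact rpow_norm_sum_of_pairwise hq (fun k l hkl => by
    rcases hdisj hkl i with h | h <;> simp [h]) s

theorem summable_smul_of_pairwise (hq : 0 < q.toReal) {x : ι → lp (fun _ : κ => ℝ) q}
    (hdisj : Pairwise fun k l => ∀ i, x k i = 0 ∨ x l i = 0) (hx : ∀ k, ‖x k‖ = 1)
    (a : lp (fun _ : ι => ℝ) q) : Summable fun k => a k • x k := by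
  refine summable_iff_vanishing_norm.2 fun ε hε => ?_
  obtain ⟨s, hs⟩ := summable_iff_vanishing_norm.1 ((lp.memℓp a).summable hq) (ε ^ q.toReal)
    (Real.rpow_pos_of_pos hε _)
  refine ⟨s, fun t ht => (Real.rpow_lt_rpow_iff (norm_nonneg _) hε.le hq).1 ?_⟩
  rw [rpow_norm_sum_smul_of_pairwise hq hdisj hx]
  exact (le_abs_self _).trans_lt (hs t ht)

theorem norm_tsum_smul_of_pairwise (hq : 0 < q.toReal) {x : ι → lp (fun _ : κ => ℝ) q}
    (hdisj : Pairwise fun k l => ∀ i, x k i = 0 ∨ x l i = 0) (hx : ∀ k, ‖x k‖ = 1)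
    (a : lp (fun _ : ι => ℝ) q) : ‖∑' k, a k • x k‖ = ‖a‖ := by
  have hlim := ((summable_smul_of_pairwise hq hdisj hx a).hasSum.norm).rpow_const
    (p := q.toReal) (Or.inr hq.le)
  have hlim' := lp.hasSum_norm hq a
  simp only [HasSum, ← rpow_norm_sum_smul_of_pairwise hq hdisj hx] at hlim'
  exact Real.rpow_left_injOn hq.ne' (norm_nonneg _) (norm_nonneg a)
    (tendsto_nhds_unique hlim hlim')

def blockIsometry (hq : 0 < q.toReal) {x : ι → lp (fun _ : κ => ℝ) q}
    (hdisj : Pairwise fun k l => ∀ i, x k i = 0 ∨ x l i = 0) (hx : ∀ k, ‖x k‖ = 1) :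
    lp (fun _ : ι => ℝ) q →ₗᵢ[ℝ] lp (fun _ : κ => ℝ) q where
  toFun a := ∑' k, a k • x k
  map_add' a b := by
    rw [← (summable_smul_of_pairwise hq hdisj hx a).tsum_add
      (summable_smul_of_pairwise hq hdisj hx b)]
    simp only [lp.coeFn_add, Pi.add_apply, add_smul]
  map_smul' c a := by
    rw [RingHom.id_apply, ← (summable_smul_of_pairwise hq hdisj hx a).tsum_const_smul c]
    simp only [lp.coeFn_smul, Pi.smul_apply, smul_eq_mul, mul_smul]
  norm_map' := norm_tsum_smul_of_pairwise hq hdisj hx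

theorem blockIsometry_apply (hq : 0 < q.toReal) {x : ι → lp (fun _ : κ => ℝ) q}
    (hdisj : Pairwise fun k l => ∀ i, x k i = 0 ∨ x l i = 0) (hx : ∀ k, ‖x k‖ = 1)
    (a : lp (fun _ : ι => ℝ) q) : blockIsometry hq hdisj hx a = ∑' k, a k • x k :=
  rfl

theorem blockIsometry_single [DecidableEq ι] (hq : 0 < q.toReal)
    {x : ι → lp (fun _ : κ => ℝ) q} (hdisj : Pairwise fun k l => ∀ i, x k i = 0 ∨ x l i = 0)
    (hx : ∀ k, ‖x k‖ = 1) (k : ι) (c : ℝ) :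
    blockIsometry hq hdisj hx (lp.single q k c) = c • x k := by
  rw [blockIsometry_apply, tsum_eq_single k fun j hj => by simp [lp.single_apply, hj]]
  simp

theorem norm_map_blockIsometry_le {Y : Type*} [NormedAddCommGroup Y] [NormedSpace ℝ Y]
    (hq : 0 < q.toReal) {x : ι → lp (fun _ : κ => ℝ) q}
    (hdisj : Pairwise fun k l => ∀ i, x k i = 0 ∨ x l i = 0) (hx : ∀ k, ‖x k‖ = 1)
    (g : lp (fun _ : κ => ℝ) q →L[ℝ] Y) {ε : ι → ℝ} {s : ℝ} (hε : HasSum ε s)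
    (hgx : ∀ k, ‖g (x k)‖ ≤ ε k) (a : lp (fun _ : ι => ℝ) q) :
    ‖g (blockIsometry hq hdisj hx a)‖ ≤ s * ‖a‖ := by
  have hq0 : q ≠ 0 := (zero_lt_one.trans_le Fact.out).ne'
  rw [blockIsometry_apply, g.map_tsum (summable_smul_of_pairwise hq hdisj hx a), mul_comm]
  refine tsum_of_norm_bounded (hε.mul_left ‖a‖) fun k => ?_
  rw [map_smul, norm_smul]
  exact mul_le_mul (lp.norm_apply_le_norm hq0 a k) (hgx k) (norm_nonneg _) (norm_nonneg _)

end Blocks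

theorem lp.mem_of_isClosed_of_sum_single_mem {α : Type*} {E : α → Type*}
    [∀ i, NormedAddCommGroup (E i)] [DecidableEq α] {p : ℝ≥0∞} [Fact (1 ≤ p)] (hp : p ≠ ⊤)
    {S : Set (lp E p)} (hS : IsClosed S)
    (hsum : ∀ (a : lp E p) (s : Finset α), ∑ i ∈ s, lp.single p i (a i) ∈ S) (a : lp E p) :
    a ∈ S :=
  hS.mem_of_tendsto (lp.hasSum_single hp a) (Filter.Eventually.of_forall (hsum a))

section EmbedsIn

variable {q : ℝ≥0∞} [Fact (1 ≤ q)] {Y : Type*} [NormedAddCommGroup Y] [NormedSpace ℝ Y]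

def IsBoundedBelowOnTail (g : lp (fun _ : ℕ => ℝ) q →L[ℝ] Y) (n : ℕ) (δ : ℝ) : Prop :=
  ∀ (b : lp (fun _ : ℕ => ℝ) q) (m : ℕ), (∀ i ∉ Ico n m, b i = 0) → δ * ‖b‖ ≤ ‖g b‖

theorem embedsIn_of_isBoundedBelowOnTail (hq : q ≠ ⊤) {g : lp (fun _ : ℕ => ℝ) q →L[ℝ] Y}
    {n : ℕ} {δ : ℝ} (hδ : 0 < δ) (hg : IsBoundedBelowOnTail g n δ) :
    EmbedsIn (lp (fun _ : ℕ => ℝ) q) Y := by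
  have hq' : 0 < q.toReal := ENNReal.toReal_pos (zero_lt_one.trans_le Fact.out).ne' hq
  set x : ℕ → lp (fun _ : ℕ => ℝ) q := fun k => lp.single q (n + k) 1
  have hdisj : Pairwise fun k l => ∀ i, x k i = 0 ∨ x l i = 0 := fun k l hkl i => by
    by_cases hi : i = n + k
    · right
      simp [x, lp.single_apply, hi, hkl]
    · left
      simp [x, lp.single_apply, hi]
  have hx : ∀ k, ‖x k‖ = 1 := fun k => by
    simp [x, lp.norm_single (zero_lt_one.trans_le Fact.out)]
  let T := blockIsometry hq' hdisj hx
  refine ⟨g.comp T.toContinuousLinearMap, δ, hδ, fun a => ?_⟩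
  refine lp.mem_of_isClosed_of_sum_single_mem hq (S := {a | δ * ‖a‖ ≤ ‖g (T a)‖})
    (isClosed_le (by fun_prop) (by fun_prop)) (fun a s => ?_) a
  have hTs : T (∑ k ∈ s, lp.single q k (a k)) = ∑ k ∈ s, lp.single q (n + k) (a k) := by
    simp only [T, map_sum, blockIsometry_single, x]
    refine sum_congr rfl fun k _ => ?_
    rw [← lp.single_smul, smul_eq_mul, mul_one]
  show δ * _ ≤ _
  rw [← T.norm_map, hTs]
  refine hg _ (n + s.sup id + 1) fun i hi => ?_
  rw [lp.coeFn_sum, Finset.sum_apply]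
  refine sum_eq_zero fun k hk => ?_
  have := le_sup (f := id) hk
  simp only [mem_Ico, id] at hi this
  simp only [lp.single_apply]
  exact Pi.single_eq_of_ne (by omega) _

theorem exists_normalized_of_not_isBoundedBelowOnTail (g : lp (fun _ : ℕ => ℝ) q →L[ℝ] Y)
    (H : ∀ n δ, 0 < δ → ¬IsBoundedBelowOnTail g n δ)
    (n : ℕ) {δ : ℝ} (hδ : 0 < δ) :
    ∃ (b : lp (fun _ : ℕ => ℝ) q) (m : ℕ),
      n ≤ m ∧ (∀ i ∉ Ico n m, b i = 0) ∧ ‖b‖ = 1 ∧ ‖g b‖ < δ := by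
  obtain ⟨b, m, hsupp, hgb⟩ : ∃ (b : lp (fun _ : ℕ => ℝ) q) (m : ℕ),
      (∀ i ∉ Ico n m, b i = 0) ∧ ‖g b‖ < δ * ‖b‖ := by
    simpa [IsBoundedBelowOnTail] using H n δ hδ
  have hb : 0 < ‖b‖ := pos_of_mul_pos_right ((norm_nonneg _).trans_lt hgb) hδ.le
  refine ⟨‖b‖⁻¹ • b, max m n, le_max_right _ _, fun i hi => ?_, ?_, ?_⟩
  · have hi' : i ∉ Ico n m := fun h => hi (Ico_subset_Ico_right (le_max_left m n) h)
    simp [hsupp i hi']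
  · rw [norm_smul, norm_inv, norm_norm, inv_mul_cancel₀ hb.ne']
  · rw [map_smul, norm_smul, norm_inv, norm_norm, inv_mul_lt_iff₀ hb, mul_comm]
    exact hgb

theorem exists_block_seq_of_not_isBoundedBelowOnTail (g : lp (fun _ : ℕ => ℝ) q →L[ℝ] Y)
    (H : ∀ n δ, 0 < δ → ¬IsBoundedBelowOnTail g n δ)
    {ε : ℕ → ℝ} (hε : ∀ k, 0 < ε k) :
    ∃ x : ℕ → lp (fun _ : ℕ => ℝ) q, (Pairwise fun k l => ∀ i, x k i = 0 ∨ x l i = 0) ∧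
      (∀ k, ‖x k‖ = 1) ∧ ∀ k, ‖g (x k)‖ < ε k := by
  choose b m hnm hsupp hb hgb using
    fun n k => exists_normalized_of_not_isBoundedBelowOnTail g H n (hε k)
  let M : ℕ → ℕ := fun k => Nat.rec 0 (fun j Mj => m Mj j) k
  have hM : ∀ k, M (k + 1) = m (M k) k := fun k => rfl
  have hMmono : Monotone M := monotone_nat_of_le_succ fun k => (hM k).symm ▸ hnm _ _
  refine ⟨fun k => b (M k) k, fun k l hkl i => ?_, fun k => hb _ _, fun k => hgb _ _⟩
  wlog hlt : k < l generalizing k l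
  · exact (this l k hkl.symm (lt_of_le_of_ne (not_lt.1 hlt) hkl.symm)).symm
  have hMkl : M (k + 1) ≤ M l := hMmono hlt
  by_cases hi : i < M (k + 1)
  · exact .inr (hsupp _ _ i fun h => by simp only [mem_Ico] at h; omega)
  · exact .inl (hsupp _ _ i fun h => by simp only [mem_Ico, ← hM] at h; omega)

theorem embedsIn_or_embedsIn_of_embedsIn_prod {Z : Type*} [NormedAddCommGroup Z]
    [NormedSpace ℝ Z] (hq : q ≠ ⊤) (h : EmbedsIn (lp (fun _ : ℕ => ℝ) q) (Y × Z)) :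
    EmbedsIn (lp (fun _ : ℕ => ℝ) q) Y ∨ EmbedsIn (lp (fun _ : ℕ => ℝ) q) Z := by
  obtain ⟨F, c, hc, hF⟩ := h
  by_cases hY : ∃ n δ, 0 < δ ∧ IsBoundedBelowOnTail (ContinuousLinearMap.fst ℝ Y Z ∘L F) n δ
  · obtain ⟨n, δ, hδ, hb⟩ := hY
    exact .inl (embedsIn_of_isBoundedBelowOnTail hq hδ hb)
  push Not at hY
  have hq' : 0 < q.toReal := ENNReal.toReal_pos (zero_lt_one.trans_le Fact.out).ne' hq
  obtain ⟨x, hdisj, hx, hsmall⟩ := exists_block_seq_of_not_isBoundedBelowOnTail _ hY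
    (ε := fun k => c / 2 / 2 / 2 ^ k) fun k => by positivity
  let T := blockIsometry hq' hdisj hx
  refine .inr ⟨ContinuousLinearMap.snd ℝ Y Z ∘L F ∘L T.toContinuousLinearMap, c / 2,
    by positivity, fun a => ?_⟩
  have hfst : ‖(F (T a)).1‖ ≤ c / 2 * ‖a‖ :=
    norm_map_blockIsometry_le hq' hdisj hx _ (hasSum_geometric_two' (c / 2))
      (fun k => (hsmall k).le) a
  have hFa : c * ‖a‖ ≤ ‖(F (T a)).1‖ + ‖(F (T a)).2‖ := by
    calc c * ‖a‖ = c * ‖T a‖ := by rw [T.norm_map]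
      _ ≤ ‖F (T a)‖ := hF _
      _ ≤ _ := max_le_add_of_nonneg (norm_nonneg _) (norm_nonneg _)
  change c / 2 * ‖a‖ ≤ ‖(F (T a)).2‖
  linarith

end EmbedsIn

theorem stmt11_general (p : ℝ) [Fact (1 ≤ ENNReal.ofReal p)]
    (X Y Z : Type*) [NormedAddCommGroup X] [NormedSpace ℝ X]
    [NormedAddCommGroup Y] [NormedSpace ℝ Y]
    [NormedAddCommGroup Z] [NormedSpace ℝ Z]
    (h : EmbedsIn (Lp' (ENNReal.ofReal p)) X) (hiso : Nonempty (X ≃L[ℝ] (Y × Z))) :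
    EmbedsIn (Lp' (ENNReal.ofReal p)) Y ∨ EmbedsIn (Lp' (ENNReal.ofReal p)) Z :=
  embedsIn_or_embedsIn_of_embedsIn_prod ENNReal.ofReal_ne_top (h.trans hiso.some.embedsIn)

/-- If `ℓ_p` embeds isomorphically into `X` and `X ≅ Y ⊕ Z`, then `ℓ_p`
embeds isomorphically into `Y` or into `Z`. -/
theorem stmt11 (p : ℝ) (hp : 1 ≤ p) [Fact (1 ≤ ENNReal.ofReal p)]
    (X Y Z : Type*) [NormedAddCommGroup X] [NormedSpace ℝ X] [CompleteSpace X]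
    [NormedAddCommGroup Y] [NormedSpace ℝ Y] [CompleteSpace Y]
    [NormedAddCommGroup Z] [NormedSpace ℝ Z] [CompleteSpace Z]
    (h : EmbedsIn (Lp' (ENNReal.ofReal p)) X) (hiso : Nonempty (X ≃L[ℝ] (Y × Z))) :
    EmbedsIn (Lp' (ENNReal.ofReal p)) Y ∨ EmbedsIn (Lp' (ENNReal.ofReal p)) Z :=
  stmt11_general p X Y Z h hiso
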